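/- The sequence of partial products N ↦ ∏_{k=0}^{N-1} (1/2) · tan(π·2^{-k-3}) · cot(π·2^{-k-4}) converges, as N → ∞, to (8/π)·√((2-√2)/(2+√2)). -/

import Mathlib

open Real Finset Filter Topology

/-! The `k`-th factor `tan (x / 2 ^ k) * cot (x / 2 ^ (k + 1)) / 2` equals `g k / g (k + 1)` with
`g k = 2 ^ k * tan (x / 2 ^ k)`, so the `N`-th partial product telescopes to
`tan x / (2 ^ N * tan (x / 2 ^ N))`. Since `tan' 0 = 1`, the denominator tends to `x`, and the
product to `tan x / x`. Take `x = π / 8`, where `tan (π / 8)` comes from the half-angle values of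
`sin` and `cos`. -/

lemma Finset.prod_range_div'₀ {G : Type*} [CommGroupWithZero G] (f : ℕ → G)
    (hf : ∀ i, f i ≠ 0) (n : ℕ) : ∏ i ∈ range n, f i / f (i + 1) = f 0 / f n := by
  induction n with
  | zero => simp [hf 0]
  | succ n ih => rw [prod_range_succ, ih, div_mul_div_cancel₀ (hf n)]

lemma tan_div_two_pow_pos {x : ℝ} (hx₀ : 0 < x) (hx : x < π / 2) (k : ℕ) :
    0 < tan (x / 2 ^ k) := by
  have h2k : (1 : ℝ) ≤ 2 ^ k := one_le_pow₀ one_le_two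
  apply tan_pos_of_pos_of_lt_pi_div_two (by positivity)
  exact (div_le_self hx₀.le h2k).trans_lt hx

lemma prod_half_mul_tan_mul_cot_half {x : ℝ} (hx₀ : 0 < x) (hx : x < π / 2) (N : ℕ) :
    ∏ k ∈ range N, 1 / 2 * tan (x / 2 ^ k) * cot (x / 2 ^ (k + 1)) =
      tan x / (2 ^ N * tan (x / 2 ^ N)) := by
  have hg : ∀ k, (2 : ℝ) ^ k * tan (x / 2 ^ k) ≠ 0 := fun k =>
    (mul_pos (by positivity) (tan_div_two_pow_pos hx₀ hx k)).ne'
  have hfactor : ∀ k : ℕ, 1 / 2 * tan (x / 2 ^ k) * cot (x / 2 ^ (k + 1)) =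
      2 ^ k * tan (x / 2 ^ k) / (2 ^ (k + 1) * tan (x / 2 ^ (k + 1))) := fun k => by
    rw [cot_eq_cos_div_sin, ← inv_div (sin _) (cos _), ← tan_eq_sin_div_cos, pow_succ]
    field_simp
  simp_rw [hfactor]
  rw [Finset.prod_range_div'₀ (fun k => 2 ^ k * tan (x / 2 ^ k)) hg]
  simp

-- `dslope tan 0` is `tan y / y` away from `0` and continuous at `0`, so no case split on `x` is
-- needed in the limit below.
lemma two_pow_mul_tan_div_two_pow (x : ℝ) (N : ℕ) :
    2 ^ N * tan (x / 2 ^ N) = x * dslope tan 0 (x / 2 ^ N) := by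
  rcases eq_or_ne x 0 with rfl | hx
  · simp
  · rw [dslope_of_ne _ (by positivity), slope_def_field, tan_zero, sub_zero, sub_zero]
    field_simp

lemma tendsto_two_pow_mul_tan_div_two_pow (x : ℝ) :
    Tendsto (fun N : ℕ => 2 ^ N * tan (x / 2 ^ N)) atTop (𝓝 x) := by
  have htan : HasDerivAt tan 1 0 := by
    simpa using hasDerivAt_tan (x := 0) (by simp)
  have hdslope : ContinuousAt (dslope tan 0) 0 :=
    continuousAt_dslope_same.mpr htan.differentiableAt
  have hx : Tendsto (fun N : ℕ => x / 2 ^ N) atTop (𝓝 0) :=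
    tendsto_const_nhds.div_atTop (tendsto_pow_atTop_atTop_of_one_lt one_lt_two)
  have hlim := (hdslope.tendsto.comp hx).const_mul x
  rw [dslope_same, htan.deriv, mul_one] at hlim
  simpa only [Function.comp_def, two_pow_mul_tan_div_two_pow] using hlim

lemma tendsto_prod_half_mul_tan_mul_cot_half {x : ℝ} (hx₀ : 0 < x) (hx : x < π / 2) :
    Tendsto (fun N : ℕ => ∏ k ∈ range N, 1 / 2 * tan (x / 2 ^ k) * cot (x / 2 ^ (k + 1)))
      atTop (𝓝 (tan x / x)) := by
  simp_rw [prod_half_mul_tan_mul_cot_half hx₀ hx]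
  exact tendsto_const_nhds.div (tendsto_two_pow_mul_tan_div_two_pow x) hx₀.ne'

lemma tan_pi_div_eight : tan (π / 8) = √((2 - √2) / (2 + √2)) := by
  rw [tan_eq_sin_div_cos, sin_pi_div_eight, cos_pi_div_eight, sqrt_div' _ (by positivity)]
  field_simp

theorem tan_product_pi_div_four :
    Filter.Tendsto
      (fun N : ℕ => ∏ k ∈ Finset.range N,
        (1 / 2 : ℝ) * Real.tan (Real.pi * (2 : ℝ) ^ (-(k : ℤ) - 3)) *
          Real.cot (Real.pi * (2 : ℝ) ^ (-(k : ℤ) - 4)))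
      Filter.atTop
      (𝓝 (8 / Real.pi * Real.sqrt ((2 - Real.sqrt 2) / (2 + Real.sqrt 2)))) := by
  have harg : ∀ k : ℕ, π * (2 : ℝ) ^ (-(k : ℤ) - 3) = π / 8 / 2 ^ k := fun k => by
    rw [zpow_sub₀ two_ne_zero, zpow_neg, zpow_natCast]
    norm_num
    ring
  have harg_succ : ∀ k : ℕ, π * (2 : ℝ) ^ (-(k : ℤ) - 4) = π / 8 / 2 ^ (k + 1) := fun k => by
    rw [zpow_sub₀ two_ne_zero, zpow_neg, zpow_natCast, pow_succ]
    norm_num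
    ring
  simp only [harg, harg_succ]
  rw [← tan_pi_div_eight, show 8 / π * tan (π / 8) = tan (π / 8) / (π / 8) by ring]
  exact tendsto_prod_half_mul_tan_mul_cot_half (by positivity) (by linarith [pi_pos])
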